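/- In the diploid Wright-Fisher model with n individuals, for each time t ≥ 2, the function k ↦ (1/k)·E[Q_t^i | G_t^i = k] is strictly increasing in k for 1 ≤ k ≤ n; in particular the expected number of descendant alleles grows super-linearly in the number of genealogical descendants. -/

import Mathlib

open Finset

/-- Sample space of the diploid Wright–Fisher model with `n` individuals run for `T`
generation steps: each individual of each generation `t+1` (step `t < T`) selects, for
each of its two allele slots, a uniformly chosen allele (parent individual together
with one of that parent's two alleles) of the previous generation, independently. -/
abbrev WFOmega (n T : ℕ) := Fin T → Fin n → Fin 2 → Fin n × Fin 2

/-- The set of generation-`t` alleles descended from the two alleles of `I_{0,i}`. -/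
def ancAlleles (n T : ℕ) (i : Fin n) (ω : WFOmega n T) : ℕ → Set (Fin n × Fin 2)
  | 0 => {a | a.1 = i}
  | t + 1 => {a | ∃ h : t < T, ω ⟨t, h⟩ a.1 a.2 ∈ ancAlleles n T i ω t}

/-- `Q_t^i`, the number of generation-`t` descendant alleles of individual `I_{0,i}`. -/
noncomputable def Qd (n T : ℕ) (i : Fin n) (ω : WFOmega n T) (t : ℕ) : ℕ :=
  (ancAlleles n T i ω t).ncard

/-- The set of generation-`t` genealogical descendants of individual `I_{0,i}`. -/
def descIndiv (n T : ℕ) (i : Fin n) (ω : WFOmega n T) : ℕ → Set (Fin n)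
  | 0 => {i}
  | t + 1 => {j | ∃ h : t < T, ∃ c : Fin 2, (ω ⟨t, h⟩ j c).1 ∈ descIndiv n T i ω t}

/-- `G_t^i`, the number of generation-`t` genealogical descendants of `I_{0,i}`. -/
noncomputable def Gd (n T : ℕ) (i : Fin n) (ω : WFOmega n T) (t : ℕ) : ℕ :=
  (descIndiv n T i ω t).ncard

open Classical in
/-- Conditional expectation of `X` given the event `A`, under the uniform
distribution on the finite sample space `Ω`. -/
noncomputable def uCondExp {Ω : Type*} [Fintype Ω] (X : Ω → ℝ) (A : Ω → Prop) : ℝ :=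
  (∑ ω ∈ Finset.univ.filter A, X ω) / (Finset.univ.filter A).card

open Function

/-!
Write `eventCard s g` for the number of sample points with `G_s = g` and `ratioSum s g` for the
sum of `Q_s / G_s` over them, so that `(1/k) E[Q_t | G_t = k] = ratioSum t k / eventCard t k`.

Resampling generation `s + 1` with the past fixed, each child is independently a descendant with
probability `hitProb n r = 2r/n - (r/n)²`, where `r = G_s`, and a descendant child carries on
average `alleleGain n r * (Q_s / r)` descendant alleles. Hence both quantities evolve by the same
binomial kernel `K r g`: `eventCard (s+1) = K eventCard s` and, for `g ≠ 0`,
`ratioSum (s+1) = K (alleleGain * ratioSum s)`.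

`K` is totally positive of order two and `alleleGain` is increasing, so by the symmetrization
identity behind Karlin's composition formula, monotonicity of `ratioSum s / eventCard s` passes
from `s` to `s + 1`; at `s = 0` both are concentrated at `g = 1`. Strictness enters through the
rows `r = 1, 2`, which both carry mass from `s = 1` on, hence for `t ≥ 2`.
-/

noncomputable def binomialMass (n : ℕ) (p : ℝ) (k : ℕ) : ℝ :=
  n.choose k * p ^ k * (1 - p) ^ (n - k)

section BinomialMass

variable {n k k' : ℕ} {p p' : ℝ}

theorem binomialMass_nonneg (hp : 0 ≤ p) (hp1 : p ≤ 1) : 0 ≤ binomialMass n p k := by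
  have : 0 ≤ 1 - p := sub_nonneg.2 hp1
  unfold binomialMass
  positivity

theorem binomialMass_pos (hp : 0 < p) (hp1 : p < 1) (hk : k ≤ n) : 0 < binomialMass n p k := by
  have : 0 < 1 - p := sub_pos.2 hp1
  have : 0 < (n.choose k : ℝ) := by exact_mod_cast Nat.choose_pos hk
  unfold binomialMass
  positivity

theorem binomialMass_mul_binomialMass (hkk' : k ≤ k') (hk' : k' ≤ n) :
    binomialMass n p k * binomialMass n p' k' =
      n.choose k * n.choose k' * (p * p') ^ k * ((1 - p) * (1 - p')) ^ (n - k') *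
        (p' * (1 - p)) ^ (k' - k) := by
  obtain ⟨d, rfl⟩ := Nat.exists_eq_add_of_le hkk'
  unfold binomialMass
  rw [show n - k = n - (k + d) + d by omega, Nat.add_sub_cancel_left]
  simp only [mul_pow, pow_add]
  ring

theorem binomialMass_mul_le (hp : 0 ≤ p) (hpp' : p ≤ p') (hp' : p' ≤ 1) (hkk' : k ≤ k')
    (hk' : k' ≤ n) :
    binomialMass n p k' * binomialMass n p' k ≤ binomialMass n p k * binomialMass n p' k' := by
  rw [mul_comm, binomialMass_mul_binomialMass hkk' hk', binomialMass_mul_binomialMass hkk' hk',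
    mul_comm p', mul_comm (1 - p')]
  have hq : 0 ≤ 1 - p' := sub_nonneg.2 hp'
  have hq' : 0 ≤ 1 - p := by linarith
  refine mul_le_mul_of_nonneg_left (pow_le_pow_left₀ (mul_nonneg hp hq) ?_ _) ?_
  · nlinarith
  · have := mul_nonneg hp (hp.trans hpp')
    have := mul_nonneg hq' hq
    positivity

theorem binomialMass_mul_lt (hp : 0 < p) (hpp' : p < p') (hp' : p' ≤ 1) (hkk' : k < k')
    (hk' : k' ≤ n) (hq : 0 < (1 - p') ^ (n - k')) :
    binomialMass n p k' * binomialMass n p' k < binomialMass n p k * binomialMass n p' k' := by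
  rw [mul_comm, binomialMass_mul_binomialMass hkk'.le hk',
    binomialMass_mul_binomialMass hkk'.le hk', mul_comm p', mul_comm (1 - p')]
  have hq' : 0 < 1 - p := by linarith
  refine mul_lt_mul_of_pos_left
    (pow_lt_pow_left₀ ?_ (mul_nonneg hp.le (by linarith)) (by omega)) ?_
  · nlinarith
  · have hc : 0 < (n.choose k : ℝ) := by exact_mod_cast Nat.choose_pos (hkk'.le.trans hk')
    have hc' : 0 < (n.choose k' : ℝ) := by exact_mod_cast Nat.choose_pos hk'
    rw [mul_pow (1 - p)]
    exact mul_pos (mul_pos (mul_pos hc hc') (pow_pos (mul_pos hp (hp.trans hpp')) _))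
      (mul_pos (pow_pos hq' _) hq)

end BinomialMass

section HitCounting

variable {ι Y : Type*} [Fintype ι] [DecidableEq ι]

theorem Fintype.sum_piFinset_apply_eq {M : Type*} [AddCommMonoid M] [DecidableEq Y]
    (S : ι → Finset Y) (f : Y → M) (j : ι) :
    ∑ σ ∈ Fintype.piFinset S, f (σ j) =
      (∏ i ∈ univ.erase j, #(S i)) • ∑ y ∈ S j, f y := by
  rw [← sum_fiberwise_of_maps_to (g := fun σ : ι → Y => σ j)
    (fun σ hσ => mem_piFinset.1 hσ j), Finset.smul_sum]
  refine Finset.sum_congr rfl fun y hy => ?_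
  rw [Finset.sum_congr rfl fun σ hσ => by rw [(mem_filter.1 hσ).2], sum_const,
    card_filter_piFinset_eq_of_mem S j hy]

variable [Fintype Y] (P : Y → Prop) [DecidablePred P]

def hitChoices (E : Finset ι) (j : ι) : Finset Y :=
  if j ∈ E then univ.filter P else univ.filter fun y => ¬P y

theorem filter_filter_eq_eq_piFinset (E : Finset ι) :
    ({σ : ι → Y | ({j | P (σ j)} : Finset ι) = E} : Finset _) =
      Fintype.piFinset (hitChoices P E) := by
  ext σ
  simp only [mem_filter, mem_univ, true_and, Fintype.mem_piFinset, Finset.ext_iff]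
  refine forall_congr' fun j => ?_
  by_cases hj : j ∈ E <;> simp [hitChoices, hj]

theorem card_piFinset_hitChoices (E : Finset ι) :
    #(Fintype.piFinset (hitChoices P E)) =
      #{y | P y} ^ #E * #{y | ¬P y} ^ (Fintype.card ι - #E) := by
  rw [Fintype.card_piFinset]
  simp only [hitChoices, apply_ite Finset.card]
  rw [prod_ite, prod_const, prod_const, filter_univ_mem, ← card_compl]
  congr 3
  ext; simp

theorem sum_filter_card_hits_eq {M : Type*} [AddCommMonoid M] (F : (ι → Y) → M) (g : ℕ) :
    ∑ σ : ι → Y with #{j | P (σ j)} = g, F σ =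
      ∑ E ∈ powersetCard g univ, ∑ σ ∈ Fintype.piFinset (hitChoices P E), F σ := by
  rw [← sum_fiberwise_of_maps_to (g := fun σ : ι → Y => ({j | P (σ j)} : Finset ι))
    (t := powersetCard g univ)
    fun σ hσ => mem_powersetCard.2 ⟨subset_univ _, (mem_filter.1 hσ).2⟩]
  refine sum_congr rfl fun E hE => ?_
  rw [filter_filter, ← filter_filter_eq_eq_piFinset]
  congr 1
  ext σ
  simp only [mem_filter, mem_univ, true_and, and_iff_right_iff_imp]
  rintro rfl
  exact (mem_powersetCard.1 hE).2

theorem card_filter_card_hits_eq_sum (g : ℕ) :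
    #{σ : ι → Y | #{j | P (σ j)} = g} =
      ∑ E ∈ powersetCard g (univ : Finset ι), #(Fintype.piFinset (hitChoices P E)) := by
  rw [card_eq_sum_ones, sum_filter_card_hits_eq]
  simp only [← card_eq_sum_ones]

theorem card_filter_card_hits_eq (g : ℕ) :
    #{σ : ι → Y | #{j | P (σ j)} = g} =
      (Fintype.card ι).choose g * #{y | P y} ^ g * #{y | ¬P y} ^ (Fintype.card ι - g) := by
  rw [card_filter_card_hits_eq_sum, sum_congr rfl fun E hE => by
    rw [card_piFinset_hitChoices, (mem_powersetCard.1 hE).2], sum_const,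
    card_powersetCard, card_univ, smul_eq_mul, mul_assoc]

theorem card_filter_card_hits_eq_mul_binomialMass [Nonempty Y] (g : ℕ) :
    (#{σ : ι → Y | #{j | P (σ j)} = g} : ℝ) =
      Fintype.card (ι → Y) * binomialMass (Fintype.card ι) (#{y | P y} / Fintype.card Y) g := by
  have hY : (Fintype.card Y : ℝ) ≠ 0 := by exact_mod_cast Fintype.card_ne_zero
  have hq : (#{y | ¬P y} : ℝ) = Fintype.card Y - #{y | P y} := by
    rw [eq_sub_iff_add_eq, ← Nat.cast_add, add_comm, card_filter_add_card_filter_not, card_univ]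
  rw [card_filter_card_hits_eq, binomialMass, Fintype.card_fun]
  push_cast
  rcases le_or_gt g (Fintype.card ι) with hg | hg
  · rw [hq, one_sub_div hY, div_pow, div_pow, ← pow_sub_mul_pow _ hg]
    field_simp
  · simp [Nat.choose_eq_zero_of_lt hg]

theorem sum_piFinset_sum_hitChoices {K : Type*} [Field K] [CharZero K] (w : Y → K)
    (hw : ∀ y, ¬P y → w y = 0) (E : Finset ι) :
    ∑ σ ∈ Fintype.piFinset (hitChoices P E), ∑ j, w (σ j) =
      #E * ((∑ y, w y) / #{y | P y}) * #(Fintype.piFinset (hitChoices P E)) := by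
  classical
  set W := ∑ y, w y
  have hW : ∑ y with P y, w y = W :=
    sum_filter_of_ne fun y _ hy => by_contra fun h => hy (hw y h)
  have hW0 : #{y | P y} = 0 → W = 0 := fun h => by
    rw [← hW, card_eq_zero.1 h, sum_empty]
  have hj : ∀ j,
      (∏ i ∈ univ.erase j, #(hitChoices P E i)) • ∑ y ∈ hitChoices P E j, w y =
      if j ∈ E then W / #{y | P y} * #(Fintype.piFinset (hitChoices P E)) else 0 := by
    intro j
    by_cases hjE : j ∈ E
    · rw [if_pos hjE, Fintype.card_piFinset, ← mul_prod_erase univ _ (mem_univ j)]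
      simp only [hitChoices, if_pos hjE, hW, nsmul_eq_mul, Nat.cast_mul]
      rcases eq_or_ne #{y | P y} 0 with h | h
      · simp [hW0 h]
      · have hp : (#{y | P y} : K) ≠ 0 := by exact_mod_cast h
        field_simp
    · rw [if_neg hjE, hitChoices, if_neg hjE,
        sum_eq_zero fun y hy => hw y (mem_filter.1 hy).2, smul_zero]
  rw [sum_comm]
  simp_rw [Fintype.sum_piFinset_apply_eq, hj]
  rw [sum_ite_mem, univ_inter, sum_const, nsmul_eq_mul, mul_assoc]

theorem sum_filter_card_hits_sum_eq {K : Type*} [Field K] [CharZero K] (w : Y → K)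
    (hw : ∀ y, ¬P y → w y = 0) (g : ℕ) :
    ∑ σ : ι → Y with #{j | P (σ j)} = g, ∑ j, w (σ j) =
      g * ((∑ y, w y) / #{y | P y}) * #{σ : ι → Y | #{j | P (σ j)} = g} := by
  rw [sum_filter_card_hits_eq, card_filter_card_hits_eq_sum, Nat.cast_sum, mul_sum]
  refine sum_congr rfl fun E hE => ?_
  rw [sum_piFinset_sum_hitChoices P w hw, (mem_powersetCard.1 hE).2]

end HitCounting

section RatioMonotone

variable {α R : Type*}

def RatioMonotoneOn [LE α] [Mul R] [LE R] (m β : α → R) (s : Finset α) : Prop :=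
  ∀ x ∈ s, ∀ y ∈ s, x ≤ y → m x * β y ≤ m y * β x

theorem two_mul_sub_sum_mul_sum_eq [CommRing R] (s : Finset α) (u v m β : α → R) :
    2 * ((∑ x ∈ s, v x * m x) * (∑ x ∈ s, u x * β x) -
        (∑ x ∈ s, u x * m x) * (∑ x ∈ s, v x * β x)) =
      ∑ x ∈ s, ∑ y ∈ s, (m y * β x - m x * β y) * (u x * v y - v x * u y) := by
  simp_rw [sum_mul_sum, ← sum_sub_distrib]
  rw [two_mul]
  nth_rw 2 [sum_comm]
  simp_rw [← sum_add_distrib]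
  exact sum_congr rfl fun x _ => sum_congr rfl fun y _ => by ring

variable [LinearOrder α] [CommRing R] [LinearOrder R] [IsStrictOrderedRing R]
  {s : Finset α} {u v m β : α → R}

theorem RatioMonotoneOn.mul_sub_mul_nonneg (huv : RatioMonotoneOn v u s)
    (hmβ : RatioMonotoneOn m β s) {x y : α} (hx : x ∈ s) (hy : y ∈ s) :
    0 ≤ (m y * β x - m x * β y) * (u x * v y - v x * u y) := by
  rcases le_total x y with hxy | hyx
  · have h1 := hmβ x hx y hy hxy
    have h2 := huv x hx y hy hxy
    exact mul_nonneg (by linarith) (by linarith [mul_comm (u x) (v y), mul_comm (v x) (u y)])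
  · have h1 := hmβ y hy x hx hyx
    have h2 := huv y hy x hx hyx
    exact mul_nonneg_of_nonpos_of_nonpos (by linarith)
      (by linarith [mul_comm (u x) (v y), mul_comm (v x) (u y)])

theorem RatioMonotoneOn.sum_mul_sum_le (huv : RatioMonotoneOn v u s)
    (hmβ : RatioMonotoneOn m β s) :
    (∑ x ∈ s, u x * m x) * (∑ x ∈ s, v x * β x) ≤
      (∑ x ∈ s, v x * m x) * (∑ x ∈ s, u x * β x) := by
  have h := two_mul_sub_sum_mul_sum_eq s u v m β
  have : 0 ≤ ∑ x ∈ s, ∑ y ∈ s, (m y * β x - m x * β y) * (u x * v y - v x * u y) :=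
    sum_nonneg fun x hx => sum_nonneg fun y hy => huv.mul_sub_mul_nonneg hmβ hx hy
  linarith

theorem RatioMonotoneOn.sum_mul_sum_lt (huv : RatioMonotoneOn v u s)
    (hmβ : RatioMonotoneOn m β s) {x y : α} (hx : x ∈ s) (hy : y ∈ s)
    (hvu : v x * u y < v y * u x) (hmβxy : m x * β y < m y * β x) :
    (∑ x ∈ s, u x * m x) * (∑ x ∈ s, v x * β x) <
      (∑ x ∈ s, v x * m x) * (∑ x ∈ s, u x * β x) := by
  have h := two_mul_sub_sum_mul_sum_eq s u v m β
  have : 0 < ∑ x ∈ s, ∑ y ∈ s, (m y * β x - m x * β y) * (u x * v y - v x * u y) := by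
    refine sum_pos' (fun x hx => sum_nonneg fun y hy => huv.mul_sub_mul_nonneg hmβ hx hy)
      ⟨x, hx, sum_pos' (fun y hy => huv.mul_sub_mul_nonneg hmβ hx hy) ⟨y, hy, ?_⟩⟩
    exact mul_pos (by linarith) (by linarith [mul_comm (u x) (v y), mul_comm (v x) (u y)])
  linarith

theorem RatioMonotoneOn.mul_left {ψ : α → R} (h : RatioMonotoneOn m β s)
    (hψ : MonotoneOn ψ s) (hψ0 : ∀ x ∈ s, 0 ≤ ψ x) (hm : ∀ x ∈ s, 0 ≤ m x)
    (hβ : ∀ x ∈ s, 0 ≤ β x) :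
    RatioMonotoneOn (fun x => ψ x * m x) β s := fun x hx y hy hxy =>
  calc ψ x * m x * β y ≤ ψ x * (m y * β x) := by
        rw [mul_assoc]; exact mul_le_mul_of_nonneg_left (h x hx y hy hxy) (hψ0 x hx)
    _ ≤ ψ y * m y * β x := by
        rw [mul_assoc]
        exact mul_le_mul_of_nonneg_right (hψ hx hy hxy) (mul_nonneg (hm y hy) (hβ x hx))

end RatioMonotone

theorem Fintype.card_mul_sum_eq_sum_sum_update {α β M : Type*} [DecidableEq α] [Fintype α]
    [Fintype β] [AddCommMonoid M] (F : (α → β) → M) (a : α) :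
    Fintype.card β • ∑ f, F f = ∑ f, ∑ b, F (update f a b) := by
  have he : Involutive fun p : (α → β) × β => (update p.1 a p.2, p.1 a) := by
    rintro ⟨f, b⟩
    simp
  calc Fintype.card β • ∑ f, F f = ∑ p : (α → β) × β, F p.1 := by
        simp [Fintype.sum_prod_type, smul_sum]
    _ = ∑ p : (α → β) × β, F (he.toPerm _ p).1 :=
        (Equiv.sum_comp he.toPerm (fun p => F p.1)).symm
    _ = ∑ f, ∑ b, F (update f a b) := Fintype.sum_prod_type _

namespace WrightFisher

abbrev ParentAlleles (n : ℕ) := Fin 2 → Fin n × Fin 2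

abbrev Generation (n : ℕ) := Fin n → ParentAlleles n

noncomputable def hitProb (n r : ℕ) : ℝ := 2 * r / n - (r / n) ^ 2

/-- A child picks its two alleles among the `2n` of the previous generation, of which `q` descend
from `I_{0,i}`; given that the child descends from one of the `r` descendants, it carries on
average `(q / n) / hitProb n r = alleleGain n r * (q / r)` descendant alleles. -/
noncomputable def alleleGain (n r : ℕ) : ℝ := n / (2 * n - r)

noncomputable def transition (n r g : ℕ) : ℝ := binomialMass n (hitProb n r) g

section Kernel

variable {n : ℕ}

theorem one_sub_hitProb (n r : ℕ) : 1 - hitProb n r = (1 - r / n) ^ 2 := by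
  unfold hitProb; ring

theorem hitProb_eq_mul (n r : ℕ) : hitProb n r = r / n * (2 - r / n) := by
  unfold hitProb; ring

theorem hitProb_nonneg {r : ℕ} (hr : r ≤ n) : 0 ≤ hitProb n r := by
  have : (r : ℝ) / n ≤ 1 := div_le_one_of_le₀ (by exact_mod_cast hr) (Nat.cast_nonneg n)
  rw [hitProb_eq_mul]
  exact mul_nonneg (by positivity) (by linarith)

theorem hitProb_le_one (r : ℕ) : hitProb n r ≤ 1 := by
  have := one_sub_hitProb n r
  nlinarith [sq_nonneg (1 - (r : ℝ) / n)]

theorem hitProb_le_hitProb {x y : ℕ} (hxy : x ≤ y) (hy : y ≤ n) :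
    hitProb n x ≤ hitProb n y := by
  have hx := one_sub_hitProb n x
  have hy' := one_sub_hitProb n y
  have : (y : ℝ) / n ≤ 1 := div_le_one_of_le₀ (by exact_mod_cast hy) (Nat.cast_nonneg n)
  have : (x : ℝ) / n ≤ y / n :=
    div_le_div_of_nonneg_right (by exact_mod_cast hxy) (Nat.cast_nonneg n)
  nlinarith

theorem hitProb_one_pos (hn : n ≠ 0) : 0 < hitProb n 1 := by
  have : (1 : ℝ) ≤ n := by exact_mod_cast Nat.one_le_iff_ne_zero.2 hn
  have : 1 / (n : ℝ) ≤ 1 := div_le_one_of_le₀ this (by linarith)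
  rw [hitProb_eq_mul, Nat.cast_one]
  exact mul_pos (by positivity) (by linarith)

theorem hitProb_one_lt_one (hn : 2 ≤ n) : hitProb n 1 < 1 := by
  have : (2 : ℝ) ≤ n := by exact_mod_cast hn
  have h := one_sub_hitProb n 1
  have : 0 < 1 - 1 / (n : ℝ) := by rw [sub_pos, div_lt_one (by linarith)]; linarith
  push_cast at h
  nlinarith [pow_pos this 2]

theorem hitProb_one_lt_hitProb_two (hn : 2 ≤ n) : hitProb n 1 < hitProb n 2 := by
  have : (2 : ℝ) ≤ n := by exact_mod_cast hn
  unfold hitProb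
  push_cast
  field_simp
  nlinarith

theorem transition_nonneg {r : ℕ} (hr : r ≤ n) (g : ℕ) : 0 ≤ transition n r g :=
  binomialMass_nonneg (hitProb_nonneg hr) (hitProb_le_one r)

theorem transition_one_pos (hn : 2 ≤ n) {g : ℕ} (hg : g ≤ n) : 0 < transition n 1 g :=
  binomialMass_pos (hitProb_one_pos (by omega)) (hitProb_one_lt_one hn) hg

theorem ratioMonotoneOn_transition {g g' : ℕ} (hgg' : g ≤ g') (hg' : g' ≤ n) :
    RatioMonotoneOn (transition n · g') (transition n · g) (Iic n) := fun x _ y hy hxy => by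
  rw [mem_Iic] at hy
  rw [mul_comm (transition n y g')]
  exact binomialMass_mul_le (hitProb_nonneg (hxy.trans hy)) (hitProb_le_hitProb hxy hy)
    (hitProb_le_one y) hgg' hg'

theorem transition_mul_lt (hn : 2 ≤ n) {k k' : ℕ} (hk : 1 ≤ k) (hkk' : k < k')
    (hk' : k' ≤ n) :
    transition n 1 k' * transition n 2 k < transition n 2 k' * transition n 1 k := by
  rw [mul_comm (transition n 2 k')]
  refine binomialMass_mul_lt (hitProb_one_pos (by omega)) (hitProb_one_lt_hitProb_two hn)
    (hitProb_le_one 2) hkk' hk' ?_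
  rw [one_sub_hitProb]
  rcases eq_or_lt_of_le hn with rfl | hn3
  · -- `hitProb 2 2 = 1`, but then `k' = 2`
    rw [show 2 - k' = 0 by omega, pow_zero]
    exact one_pos
  · have : (2 : ℝ) / n < 1 := by
      rw [div_lt_one (by positivity)]
      exact_mod_cast hn3
    exact pow_pos (pow_pos (by linarith) 2) _

theorem transition_mul_le_sum {f : ℕ → ℝ} (hf : ∀ r ∈ Iic n, 0 ≤ f r) {r : ℕ} (hr : r ≤ n)
    (g : ℕ) : transition n r g * f r ≤ ∑ x ∈ Iic n, transition n x g * f x :=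
  single_le_sum (f := fun x => transition n x g * f x)
    (fun x hx => mul_nonneg (transition_nonneg (mem_Iic.1 hx) g) (hf x hx)) (mem_Iic.2 hr)

theorem alleleGain_nonneg {r : ℕ} (hr : r ≤ n) : 0 ≤ alleleGain n r := by
  have : (r : ℝ) ≤ n := by exact_mod_cast hr
  unfold alleleGain
  exact div_nonneg (Nat.cast_nonneg n) (by linarith)

theorem alleleGain_pos {r : ℕ} (hn : n ≠ 0) (hr : r ≤ n) : 0 < alleleGain n r := by
  have : (r : ℝ) ≤ n := by exact_mod_cast hr
  have : (0 : ℝ) < n := by positivity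
  unfold alleleGain
  exact div_pos this (by linarith)

theorem alleleGain_monotoneOn : MonotoneOn (alleleGain n) (Iic n : Finset ℕ) := by
  intro x _ y hy hxy
  rw [coe_Iic, Set.mem_Iic] at hy
  have hxy' : (x : ℝ) ≤ y := by exact_mod_cast hxy
  have hy' : (y : ℝ) ≤ n := by exact_mod_cast hy
  rcases eq_or_ne n 0 with rfl | hn
  · simp [alleleGain]
  have : (0 : ℝ) < n := by positivity
  exact div_le_div_of_nonneg_left (Nat.cast_nonneg n) (by linarith) (by linarith)

theorem alleleGain_one_lt_two (hn : 2 ≤ n) : alleleGain n 1 < alleleGain n 2 := by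
  have : (2 : ℝ) ≤ n := by exact_mod_cast hn
  unfold alleleGain
  push_cast
  exact div_lt_div_of_pos_left (by linarith) (by linarith) (by linarith)

theorem div_mul_hitProb_eq {r : ℕ} (hr : r ≤ n) (x : ℝ) :
    x / (n * hitProb n r) = alleleGain n r * (x / r) := by
  rcases eq_or_ne r 0 with rfl | hr0
  · simp [hitProb]
  have hn : (n : ℝ) ≠ 0 := by exact_mod_cast (show n ≠ 0 by omega)
  have h2 : (2 * n - r : ℝ) ≠ 0 := by
    have : (r : ℝ) ≤ n := by exact_mod_cast hr
    have : (0 : ℝ) < r := by positivity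
    linarith
  unfold hitProb alleleGain
  field_simp

end Kernel

section OneGeneration

variable {n : ℕ}

theorem card_hits_div_card_eq_hitProb (D : Finset (Fin n)) :
    (#{y : ParentAlleles n | ∃ c, (y c).1 ∈ D} : ℝ) /
      Fintype.card (ParentAlleles n) = hitProb n #D := by
  have hmiss : #{y : ParentAlleles n | ¬∃ c, (y c).1 ∈ D} = ((n - #D) * 2) ^ 2 := by
    have : ({y : ParentAlleles n | ¬∃ c, (y c).1 ∈ D} : Finset _) =
        Fintype.piFinset fun _ => Dᶜ ×ˢ univ := by
      ext y; simp
    rw [this, Fintype.card_piFinset_const, card_product, card_compl, Fintype.card_fin, card_univ,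
      Fintype.card_fin]
  have hD : #D ≤ n := card_le_univ D |>.trans_eq (Fintype.card_fin n)
  have hY : Fintype.card (ParentAlleles n) = (2 * n) ^ 2 := by simp [mul_comm]
  have htot := card_filter_add_card_filter_not (s := univ) fun y : ParentAlleles n =>
    ∃ c, (y c).1 ∈ D
  rw [card_univ, hY, hmiss, ← Nat.cast_inj (R := ℝ)] at htot
  push_cast [Nat.cast_sub hD] at htot
  rcases eq_or_ne n 0 with rfl | hn
  · simp [hitProb]
  rw [eq_sub_of_add_eq htot, hitProb, hY]
  push_cast
  field_simp
  ring

theorem card_filter_card_hits_generation [NeZero n] (D : Finset (Fin n)) (g : ℕ) :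
    (#{σ : Generation n | #{j | ∃ c, (σ j c).1 ∈ D} = g} : ℝ) =
      Fintype.card (Generation n) * transition n #D g := by
  have := card_filter_card_hits_eq_mul_binomialMass (ι := Fin n)
    (fun y : ParentAlleles n => ∃ c, (y c).1 ∈ D) g
  rwa [card_hits_div_card_eq_hitProb, Fintype.card_fin] at this

theorem sum_card_filter_mem (A : Finset (Fin n × Fin 2)) :
    ∑ y : ParentAlleles n, (#{c | y c ∈ A} : ℝ) = 4 * n * #A := by
  have hc : ∀ c : Fin 2,
      ∑ y : ParentAlleles n, (if y c ∈ A then 1 else 0 : ℝ) = 2 * n * #A := by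
    intro c
    have := Fintype.sum_piFinset_apply (fun z : Fin n × Fin 2 => if z ∈ A then (1 : ℝ) else 0)
      univ c
    rw [Fintype.piFinset_univ, sum_boole] at this
    simp [this, mul_comm]
  simp_rw [natCast_card_filter]
  rw [sum_comm]
  simp [hc]
  ring

theorem sum_filter_card_hits_generation [NeZero n] (D : Finset (Fin n)) (A : Finset (Fin n × Fin 2))
    (hA : ∀ a ∈ A, a.1 ∈ D) (g : ℕ) :
    ∑ σ : Generation n with #{j | ∃ c, (σ j c).1 ∈ D} = g,
        (#{a : Fin n × Fin 2 | σ a.1 a.2 ∈ A} : ℝ) =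
      g * (#A / (n * hitProb n #D)) *
        #{σ : Generation n | #{j | ∃ c, (σ j c).1 ∈ D} = g} := by
  have hsplit : ∀ σ : Generation n,
      (#{a : Fin n × Fin 2 | σ a.1 a.2 ∈ A} : ℝ) = ∑ j, (#{c | σ j c ∈ A} : ℝ) := by
    intro σ
    simp_rw [natCast_card_filter]
    exact Fintype.sum_prod_type _
  have hw : ∀ y : ParentAlleles n, ¬(∃ c, (y c).1 ∈ D) → (#{c | y c ∈ A} : ℝ) = 0 := by
    intro y hy
    simp only [Nat.cast_eq_zero, card_eq_zero, filter_eq_empty_iff, mem_univ, true_implies]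
    exact fun c hc => hy ⟨c, hA _ hc⟩
  rw [sum_congr rfl fun σ _ => hsplit σ, sum_filter_card_hits_sum_eq (ι := Fin n)
    (fun y : ParentAlleles n => ∃ c, (y c).1 ∈ D) _ hw g]
  congr 2
  have hn : (n : ℝ) ≠ 0 := by exact_mod_cast NeZero.ne n
  have hY : (Fintype.card (ParentAlleles n) : ℝ) = (2 * n) ^ 2 := by simp [mul_comm]
  have hY0 : (Fintype.card (ParentAlleles n) : ℝ) ≠ 0 := by rw [hY]; positivity
  rw [sum_card_filter_mem,
    ← div_mul_cancel₀ (#{y : ParentAlleles n | ∃ c, (y c).1 ∈ D} : ℝ) hY0,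
    card_hits_div_card_eq_hitProb, hY]
  field_simp
  ring

theorem card_generation_ne_zero : (Fintype.card (Generation n) : ℝ) ≠ 0 := by
  have : Nonempty (Generation n) := ⟨fun j _ => (j, 0)⟩
  exact_mod_cast Fintype.card_ne_zero

end OneGeneration

section SamplePaths

variable {n T : ℕ} (i : Fin n)

theorem descIndiv_update_of_le {s u : ℕ} (hs : s < T) (ω : WFOmega n T)
    (σ : Generation n) (hu : u ≤ s) :
    descIndiv n T i (update ω ⟨s, hs⟩ σ) u = descIndiv n T i ω u := by
  induction u with
  | zero => rfl
  | succ u ih =>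
    ext j
    simp only [descIndiv, Set.mem_ofPred_eq, ih (by omega)]
    refine exists_congr fun h => ?_
    rw [update_of_ne (by simp [Fin.ext_iff]; omega)]

theorem descIndiv_update_succ {s : ℕ} (hs : s < T) (ω : WFOmega n T)
    (σ : Generation n) :
    descIndiv n T i (update ω ⟨s, hs⟩ σ) (s + 1) =
      {j | ∃ c, (σ j c).1 ∈ descIndiv n T i ω s} := by
  ext j
  simp [descIndiv, descIndiv_update_of_le i hs ω σ le_rfl, hs]

theorem ancAlleles_update_of_le {s u : ℕ} (hs : s < T) (ω : WFOmega n T)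
    (σ : Generation n) (hu : u ≤ s) :
    ancAlleles n T i (update ω ⟨s, hs⟩ σ) u = ancAlleles n T i ω u := by
  induction u with
  | zero => rfl
  | succ u ih =>
    ext a
    simp only [ancAlleles, Set.mem_ofPred_eq, ih (by omega)]
    refine exists_congr fun h => ?_
    rw [update_of_ne (by simp [Fin.ext_iff]; omega)]

theorem ancAlleles_update_succ {s : ℕ} (hs : s < T) (ω : WFOmega n T)
    (σ : Generation n) :
    ancAlleles n T i (update ω ⟨s, hs⟩ σ) (s + 1) =
      {a | σ a.1 a.2 ∈ ancAlleles n T i ω s} := by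
  ext a
  simp [ancAlleles, ancAlleles_update_of_le i hs ω σ le_rfl, hs]

theorem fst_mem_descIndiv_of_mem_ancAlleles {ω : WFOmega n T} {s : ℕ} {a : Fin n × Fin 2}
    (ha : a ∈ ancAlleles n T i ω s) : a.1 ∈ descIndiv n T i ω s := by
  induction s generalizing a with
  | zero => exact ha
  | succ s ih =>
    obtain ⟨hs, h⟩ := ha
    exact ⟨hs, a.2, ih h⟩

theorem Gd_le (ω : WFOmega n T) (s : ℕ) : Gd n T i ω s ≤ n :=
  (Set.ncard_le_card _).trans_eq (Nat.card_eq_fintype_card.trans (Fintype.card_fin n))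

theorem Gd_zero (ω : WFOmega n T) : Gd n T i ω 0 = 1 := Set.ncard_singleton i

theorem Qd_zero_pos (ω : WFOmega n T) : 0 < Qd n T i ω 0 :=
  (Set.ncard_pos (Set.toFinite _)).2 ⟨(i, 0), rfl⟩

open Classical in
theorem Gd_update_succ {s : ℕ} (hs : s < T) (ω : WFOmega n T) (σ : Generation n) :
    Gd n T i (update ω ⟨s, hs⟩ σ) (s + 1) =
      #{j | ∃ c, (σ j c).1 ∈ (descIndiv n T i ω s).toFinset} := by
  rw [Gd, descIndiv_update_succ, ← coe_filter_univ, Set.ncard_coe_finset]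
  simp only [Set.mem_toFinset]

open Classical in
theorem Qd_update_succ {s : ℕ} (hs : s < T) (ω : WFOmega n T) (σ : Generation n) :
    Qd n T i (update ω ⟨s, hs⟩ σ) (s + 1) =
      #{a : Fin n × Fin 2 | σ a.1 a.2 ∈ (ancAlleles n T i ω s).toFinset} := by
  rw [Qd, ancAlleles_update_succ, ← coe_filter_univ, Set.ncard_coe_finset]
  simp only [Set.mem_toFinset]

theorem card_filter_Gd_update_succ {s : ℕ} (hs : s < T) (ω : WFOmega n T) (g : ℕ) :
    (#{σ : Generation n | Gd n T i (update ω ⟨s, hs⟩ σ) (s + 1) = g} : ℝ) =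
      Fintype.card (Generation n) * transition n (Gd n T i ω s) g := by
  classical
  have : NeZero n := ⟨i.pos.ne'⟩
  simp_rw [Gd_update_succ]
  rw [card_filter_card_hits_generation, Gd, Set.ncard_eq_toFinset_card']

theorem sum_filter_Gd_update_succ_div {s g : ℕ} (hs : s < T) (ω : WFOmega n T) (hg : g ≠ 0) :
    ∑ σ : Generation n with Gd n T i (update ω ⟨s, hs⟩ σ) (s + 1) = g,
        (Qd n T i (update ω ⟨s, hs⟩ σ) (s + 1) : ℝ) /
          Gd n T i (update ω ⟨s, hs⟩ σ) (s + 1) =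
      Fintype.card (Generation n) *
        (transition n (Gd n T i ω s) g *
          (alleleGain n (Gd n T i ω s) * (Qd n T i ω s / Gd n T i ω s))) := by
  classical
  have : NeZero n := ⟨i.pos.ne'⟩
  rw [sum_congr rfl fun σ hσ => by rw [(mem_filter.1 hσ).2], ← sum_div]
  simp_rw [Qd_update_succ, Gd_update_succ]
  rw [sum_filter_card_hits_generation _ _ (fun a ha => by
      simpa using fst_mem_descIndiv_of_mem_ancAlleles i (by simpa using ha)),
    card_filter_card_hits_generation, ← Set.ncard_eq_toFinset_card', ← Set.ncard_eq_toFinset_card',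
    ← Gd, ← Qd, div_mul_hitProb_eq (Gd_le i ω s)]
  have : (g : ℝ) ≠ 0 := by exact_mod_cast hg
  field_simp

theorem sum_mul_eq_sum_Iic (s : ℕ) (f : ℕ → ℝ) (X : WFOmega n T → ℝ) :
    ∑ ω, f (Gd n T i ω s) * X ω =
      ∑ r ∈ Iic n, f r * ∑ ω with Gd n T i ω s = r, X ω := by
  rw [← sum_fiberwise_of_maps_to fun ω _ => mem_Iic.2 (Gd_le i ω s)]
  refine sum_congr rfl fun r _ => ?_
  rw [mul_sum]
  exact sum_congr rfl fun ω hω => by rw [(mem_filter.1 hω).2]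

noncomputable def eventCard (n T : ℕ) (i : Fin n) (s g : ℕ) : ℝ :=
  #{ω : WFOmega n T | Gd n T i ω s = g}

noncomputable def ratioSum (n T : ℕ) (i : Fin n) (s g : ℕ) : ℝ :=
  ∑ ω : WFOmega n T with Gd n T i ω s = g, (Qd n T i ω s : ℝ) / Gd n T i ω s

theorem eventCard_succ {s : ℕ} (hs : s < T) (g : ℕ) :
    eventCard n T i (s + 1) g = ∑ r ∈ Iic n, transition n r g * eventCard n T i s r := by
  apply mul_left_cancel₀ card_generation_ne_zero
  have := Fintype.card_mul_sum_eq_sum_sum_update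
    (fun ω : WFOmega n T => if Gd n T i ω (s + 1) = g then (1 : ℝ) else 0) ⟨s, hs⟩
  rw [nsmul_eq_mul] at this
  rw [eventCard, natCast_card_filter, this]
  simp_rw [← natCast_card_filter, card_filter_Gd_update_succ, ← mul_sum]
  congr 1
  simpa [eventCard] using sum_mul_eq_sum_Iic i s (transition n · g) 1

theorem ratioSum_succ {s g : ℕ} (hs : s < T) (hg : g ≠ 0) :
    ratioSum n T i (s + 1) g =
      ∑ r ∈ Iic n, transition n r g * (alleleGain n r * ratioSum n T i s r) := by
  apply mul_left_cancel₀ card_generation_ne_zero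
  have := Fintype.card_mul_sum_eq_sum_sum_update (fun ω : WFOmega n T =>
      if Gd n T i ω (s + 1) = g then (Qd n T i ω (s + 1) : ℝ) / Gd n T i ω (s + 1) else 0)
    ⟨s, hs⟩
  rw [nsmul_eq_mul] at this
  rw [ratioSum, sum_filter, this]
  simp_rw [← sum_filter, sum_filter_Gd_update_succ_div i hs _ hg, ← mul_sum, ← mul_assoc]
  rw [sum_mul_eq_sum_Iic i s (fun r => transition n r g * alleleGain n r)]
  rfl

theorem eventCard_nonneg (s g : ℕ) : 0 ≤ eventCard n T i s g := Nat.cast_nonneg _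

theorem ratioSum_nonneg (s g : ℕ) : 0 ≤ ratioSum n T i s g :=
  sum_nonneg fun _ _ => by positivity

theorem ratioSum_zero_right (s : ℕ) : ratioSum n T i s 0 = 0 :=
  sum_eq_zero fun ω hω => by rw [(mem_filter.1 hω).2, Nat.cast_zero, div_zero]

theorem eventCard_zero_of_ne_one {g : ℕ} (hg : g ≠ 1) : eventCard n T i 0 g = 0 := by
  rw [eventCard, Nat.cast_eq_zero, card_eq_zero, filter_eq_empty_iff]
  exact fun ω _ => by rw [Gd_zero]; exact hg.symm

theorem ratioSum_zero_of_ne_one {g : ℕ} (hg : g ≠ 1) : ratioSum n T i 0 g = 0 := by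
  rw [ratioSum, filter_false_of_mem fun ω _ => by rw [Gd_zero]; exact hg.symm, sum_empty]

theorem ratioMonotoneOn_ratioSum_eventCard {s : ℕ} (hs : s ≤ T) :
    RatioMonotoneOn (ratioSum n T i s) (eventCard n T i s) (Iic n) := by
  induction s with
  | zero =>
    intro x _ y _ hxy
    rcases eq_or_ne x 1 with rfl | hx
    · rcases eq_or_ne y 1 with rfl | hy
      · rfl
      · rw [eventCard_zero_of_ne_one i hy, mul_zero]
        exact mul_nonneg (ratioSum_nonneg i _ _) (eventCard_nonneg i _ _)
    · rw [ratioSum_zero_of_ne_one i hx, zero_mul]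
      exact mul_nonneg (ratioSum_nonneg i _ _) (eventCard_nonneg i _ _)
  | succ s ih =>
    intro x _ y hy hxy
    rcases eq_or_ne x 0 with rfl | hx
    · rw [ratioSum_zero_right, zero_mul]
      exact mul_nonneg (ratioSum_nonneg i _ _) (eventCard_nonneg i _ _)
    rw [ratioSum_succ i hs hx, ratioSum_succ i hs (by omega), eventCard_succ i hs,
      eventCard_succ i hs]
    exact (ratioMonotoneOn_transition hxy (mem_Iic.1 hy)).sum_mul_sum_le
      ((ih (by omega)).mul_left alleleGain_monotoneOn (fun r hr => alleleGain_nonneg (mem_Iic.1 hr))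
        (fun r _ => ratioSum_nonneg i _ _) fun r _ => eventCard_nonneg i _ _)

theorem eventCard_one_pos (hn : 2 ≤ n) {s : ℕ} (hs : s ≤ T) : 0 < eventCard n T i s 1 := by
  induction s with
  | zero =>
    rw [eventCard, filter_true_of_mem fun ω _ => Gd_zero i ω]
    have : Nonempty (WFOmega n T) := ⟨fun _ j _ => (j, 0)⟩
    exact_mod_cast card_pos.2 univ_nonempty
  | succ s ih =>
    rw [eventCard_succ i hs]
    exact (mul_pos (transition_one_pos hn (g := 1) (by omega)) (ih (by omega))).trans_le
      (transition_mul_le_sum (fun r _ => eventCard_nonneg i s r) (r := 1) (by omega) 1)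

theorem eventCard_pos (hn : 2 ≤ n) {s g : ℕ} (hs0 : s ≠ 0) (hs : s ≤ T) (hg : g ≤ n) :
    0 < eventCard n T i s g := by
  obtain ⟨s, rfl⟩ := Nat.exists_eq_succ_of_ne_zero hs0
  rw [eventCard_succ i hs]
  exact (mul_pos (transition_one_pos hn hg) (eventCard_one_pos i hn (by omega))).trans_le
    (transition_mul_le_sum (fun r _ => eventCard_nonneg i s r) (r := 1) (by omega) g)

theorem ratioSum_one_pos (hn : 2 ≤ n) {s : ℕ} (hs : s ≤ T) : 0 < ratioSum n T i s 1 := by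
  induction s with
  | zero =>
    rw [ratioSum, filter_true_of_mem fun ω _ => Gd_zero i ω]
    have : Nonempty (WFOmega n T) := ⟨fun _ j _ => (j, 0)⟩
    exact sum_pos (fun ω _ => div_pos (by exact_mod_cast Qd_zero_pos i ω)
      (by rw [Gd_zero, Nat.cast_one]; exact one_pos)) univ_nonempty
  | succ s ih =>
    rw [ratioSum_succ i hs (g := 1) one_ne_zero]
    exact (mul_pos (transition_one_pos hn (g := 1) (by omega))
      (mul_pos (alleleGain_pos (by omega) (by omega)) (ih (by omega)))).trans_le
      (transition_mul_le_sum (fun r hr => mul_nonneg (alleleGain_nonneg (mem_Iic.1 hr))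
        (ratioSum_nonneg i s r)) (r := 1) (by omega) 1)

theorem ratioSum_mul_eventCard_lt (hn : 2 ≤ n) {t k k' : ℕ} (ht : 2 ≤ t) (hT : t ≤ T)
    (hk : 1 ≤ k) (hkk' : k < k') (hk' : k' ≤ n) :
    ratioSum n T i t k * eventCard n T i t k' < ratioSum n T i t k' * eventCard n T i t k := by
  obtain ⟨s, rfl⟩ := Nat.exists_eq_add_of_le' (show 1 ≤ t by omega)
  have hs : s < T := by omega
  have hmono := ratioMonotoneOn_ratioSum_eventCard i (s := s) hs.le
  have hpair : alleleGain n 1 * ratioSum n T i s 1 * eventCard n T i s 2 <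
      alleleGain n 2 * ratioSum n T i s 2 * eventCard n T i s 1 :=
    calc alleleGain n 1 * ratioSum n T i s 1 * eventCard n T i s 2
        < alleleGain n 2 * (ratioSum n T i s 1 * eventCard n T i s 2) := by
          rw [mul_assoc]
          exact mul_lt_mul_of_pos_right (alleleGain_one_lt_two hn)
            (mul_pos (ratioSum_one_pos i hn hs.le) (eventCard_pos i hn (by omega) hs.le hn))
      _ ≤ alleleGain n 2 * (ratioSum n T i s 2 * eventCard n T i s 1) :=
          mul_le_mul_of_nonneg_left (hmono 1 (mem_Iic.2 (by omega)) 2 (mem_Iic.2 hn) one_le_two)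
            (alleleGain_nonneg hn)
      _ = alleleGain n 2 * ratioSum n T i s 2 * eventCard n T i s 1 := by ring
  rw [ratioSum_succ i hs (by omega), ratioSum_succ i hs (by omega), eventCard_succ i hs,
    eventCard_succ i hs]
  exact (ratioMonotoneOn_transition hkk'.le hk').sum_mul_sum_lt
    (hmono.mul_left alleleGain_monotoneOn (fun r hr => alleleGain_nonneg (mem_Iic.1 hr))
      (fun r _ => ratioSum_nonneg i s r) fun r _ => eventCard_nonneg i s r)
    (mem_Iic.2 (by omega)) (mem_Iic.2 hn) (transition_mul_lt hn hk hkk' hk') hpair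

theorem one_div_mul_uCondExp_eq (t k : ℕ) :
    1 / (k : ℝ) *
        uCondExp (fun ω : WFOmega n T => (Qd n T i ω t : ℝ)) (fun ω => Gd n T i ω t = k) =
      ratioSum n T i t k / eventCard n T i t k := by
  have h : ratioSum n T i t k =
      (∑ ω : WFOmega n T with Gd n T i ω t = k, (Qd n T i ω t : ℝ)) / k := by
    rw [ratioSum, sum_div]
    exact sum_congr rfl fun ω hω => by rw [(mem_filter.1 hω).2]
  rw [h, eventCard, uCondExp, div_div, one_div_mul_eq_div, div_div, mul_comm (k : ℝ)]
  congr

end SamplePaths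

end WrightFisher

theorem wf_normalized_cond_expectation_strictMono_general (n T t : ℕ)
    (ht : 2 ≤ t) (hT : t ≤ T) (i : Fin n) (k k' : ℕ)
    (hk1 : 1 ≤ k) (hkk' : k < k') (hk'n : k' ≤ n) :
    (1 / (k : ℝ)) *
        uCondExp (fun ω : WFOmega n T => (Qd n T i ω t : ℝ)) (fun ω => Gd n T i ω t = k)
      < (1 / (k' : ℝ)) *
        uCondExp (fun ω : WFOmega n T => (Qd n T i ω t : ℝ))
          (fun ω => Gd n T i ω t = k') := by
  have hn : 2 ≤ n := by omega
  rw [WrightFisher.one_div_mul_uCondExp_eq, WrightFisher.one_div_mul_uCondExp_eq,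
    div_lt_div_iff₀ (WrightFisher.eventCard_pos i hn (by omega) hT (by omega))
      (WrightFisher.eventCard_pos i hn (by omega) hT hk'n)]
  exact WrightFisher.ratioSum_mul_eventCard_lt i hn ht hT hk1 hkk' hk'n

/-- In the diploid Wright–Fisher model with `n` individuals, for each
time `t ≥ 2`, the map `k ↦ (1/k) E[Q_t^i | G_t^i = k]` is strictly increasing for
`1 ≤ k ≤ n`. -/
theorem wf_normalized_cond_expectation_strictMono (n T t : ℕ) (hn : 0 < n)
    (ht : 2 ≤ t) (hT : t ≤ T) (i : Fin n) (k k' : ℕ)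
    (hk1 : 1 ≤ k) (hkk' : k < k') (hk'n : k' ≤ n)
    (hpos : ∃ ω : WFOmega n T, Gd n T i ω t = k)
    (hpos' : ∃ ω : WFOmega n T, Gd n T i ω t = k') :
    (1 / (k : ℝ)) *
        uCondExp (fun ω : WFOmega n T => (Qd n T i ω t : ℝ)) (fun ω => Gd n T i ω t = k)
      < (1 / (k' : ℝ)) *
        uCondExp (fun ω : WFOmega n T => (Qd n T i ω t : ℝ))
          (fun ω => Gd n T i ω t = k') :=
  wf_normalized_cond_expectation_strictMono_general n T t ht hT i k k' hk1 hkk' hk'n
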